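/- (Marginal likelihood under an Inverse-Gamma prior on the variance.) Let ν > 0 and γ > 0. Then ∫₀^∞ (1/Γ(ν/2)) (γ/2)^{ν/2} s^{−ν/2 − 1} exp(−γ/(2s)) · (2πs)^{−N/2} (det Σ)^{−1/2} (det M / det D)^{1/2} exp(−yᵀ P y/(2s)) ds = π^{−N/2} (det Σ)^{−1/2} (det M / det D)^{1/2} · (Γ((N + ν)/2)/Γ(ν/2)) · γ^{ν/2} / (γ + yᵀ P y)^{(N + ν)/2}. -/

import Mathlib

/-!
Conditionally on `s`, the likelihood is `(2πs)^{-N/2} c e^{-Q/(2s)}` with `Q = yᵀ P y`, so the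
prior times the likelihood is a constant times `s^{-a-1} e^{-b/s}` with `a = (N + ν)/2` and
`b = (γ + Q)/2`: an unnormalised Inverse-Gamma density, whose integral is `Γ(a) / b^a`
(substitute `s ↦ 1/s` in the Gamma integral). This needs `b > 0`, i.e. `Q ≥ 0`: by the Woodbury
identity `P = (Σ + H D Hᵀ)⁻¹`, which is positive definite.
-/

open Matrix MeasureTheory Set

theorem integral_rpow_neg_sub_one_mul_exp_neg_div_Ioi {a b : ℝ} (ha : 0 < a) (hb : 0 < b) :
    ∫ s in Ioi (0 : ℝ), s ^ (-a - 1) * Real.exp (-(b / s)) = Real.Gamma a / b ^ a := by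
  have h := integral_comp_rpow_Ioi
    (fun y => y ^ (a - 1) * Real.exp (-(b * y))) (p := (-1 : ℝ)) (by norm_num)
  rw [Real.integral_rpow_mul_exp_neg_mul_Ioi ha hb] at h
  have hsubst : ∫ s in Ioi (0 : ℝ), s ^ (-a - 1) * Real.exp (-(b / s)) =
      ∫ x in Ioi (0 : ℝ), (|(-1 : ℝ)| * x ^ ((-1 : ℝ) - 1)) •
        ((fun y => y ^ (a - 1) * Real.exp (-(b * y))) (x ^ (-1 : ℝ))) := by
    refine setIntegral_congr_fun measurableSet_Ioi fun x (hx0 : 0 < x) => ?_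
    simp only [abs_neg, abs_one, one_mul, smul_eq_mul, Real.rpow_neg_one,
      Real.inv_rpow hx0.le, ← Real.rpow_neg hx0.le, div_eq_mul_inv]
    rw [← mul_assoc, ← Real.rpow_add hx0]
    ring_nf
  rw [hsubst, h, one_div, Real.inv_rpow hb.le, mul_comm, ← div_eq_mul_inv]

namespace Matrix

variable {m n : Type*} [Fintype m] [DecidableEq m] [Fintype n] [DecidableEq n]
  {S : Matrix m m ℝ} {D : Matrix n n ℝ}

theorem PosDef.add_mul_mul_transpose_inv_eq_sub (hS : S.PosDef) (hD : D.PosDef)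
    (H : Matrix m n ℝ) :
    (S + H * D * Hᵀ)⁻¹ = S⁻¹ - S⁻¹ * H * (Hᵀ * S⁻¹ * H + D⁻¹)⁻¹ * Hᵀ * S⁻¹ := by
  have hInner : (D⁻¹ + Hᵀ * S⁻¹ * H).PosDef :=
    hD.inv.add_posSemidef (by simpa using hS.inv.posSemidef.conjTranspose_mul_mul_same H)
  rw [add_comm (Hᵀ * S⁻¹ * H)]
  exact add_mul_mul_inv_eq_sub _ _ _ _ hS.isUnit hD.isUnit hInner.isUnit

theorem PosDef.inv_sub_mul_mul_inv_mul_posDef (hS : S.PosDef) (hD : D.PosDef)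
    (H : Matrix m n ℝ) :
    (S⁻¹ - S⁻¹ * H * (Hᵀ * S⁻¹ * H + D⁻¹)⁻¹ * Hᵀ * S⁻¹).PosDef := by
  rw [← hS.add_mul_mul_transpose_inv_eq_sub hD H]
  exact (hS.add_posSemidef (by simpa using hD.posSemidef.mul_mul_conjTranspose_same H)).inv

end Matrix

theorem integral_invGamma_mul_gaussian_likelihood {n ν γ Q c : ℝ} (hnν : 0 < n + ν)
    (hγ : 0 < γ) (hQ : 0 ≤ Q) :
    (∫ s in Ioi (0 : ℝ),
      ((1 / Real.Gamma (ν / 2)) * (γ / 2) ^ (ν / 2) * s ^ (-ν / 2 - 1) *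
          Real.exp (-γ / (2 * s))) *
        ((2 * Real.pi * s) ^ (-n / 2) * c * Real.exp (-Q / (2 * s))))
      = Real.pi ^ (-n / 2) * c * (Real.Gamma ((n + ν) / 2) / Real.Gamma (ν / 2)) *
          γ ^ (ν / 2) / (γ + Q) ^ ((n + ν) / 2) := by
  set a : ℝ := (n + ν) / 2 with ha_def
  set C : ℝ := 1 / Real.Gamma (ν / 2) * (γ / 2) ^ (ν / 2) * ((2 * Real.pi) ^ (-n / 2) * c)
    with hC
  have hintegrand : ∀ s ∈ Ioi (0 : ℝ),
      ((1 / Real.Gamma (ν / 2)) * (γ / 2) ^ (ν / 2) * s ^ (-ν / 2 - 1) *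
          Real.exp (-γ / (2 * s))) *
        ((2 * Real.pi * s) ^ (-n / 2) * c * Real.exp (-Q / (2 * s)))
      = C * (s ^ (-a - 1) * Real.exp (-(((γ + Q) / 2) / s))) := by
    intro s (hs : 0 < s)
    have hpow : s ^ (-ν / 2 - 1) * s ^ (-n / 2) = s ^ (-a - 1) := by
      rw [← Real.rpow_add hs, ha_def]; ring_nf
    have hexp : Real.exp (-γ / (2 * s)) * Real.exp (-Q / (2 * s))
        = Real.exp (-(((γ + Q) / 2) / s)) := by
      rw [← Real.exp_add]; congr 1; field_simp; ring
    rw [Real.mul_rpow (by positivity) hs.le, ← hpow, ← hexp, hC]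
    ring
  rw [setIntegral_congr_fun measurableSet_Ioi hintegrand, integral_const_mul,
    integral_rpow_neg_sub_one_mul_exp_neg_div_Ioi (by positivity) (by positivity), hC,
    Real.div_rpow (add_nonneg hγ.le hQ) zero_le_two, Real.div_rpow hγ.le zero_le_two,
    Real.mul_rpow zero_le_two Real.pi_pos.le, neg_div, Real.rpow_neg zero_le_two,
    show (2 : ℝ) ^ a = 2 ^ (n / 2) * 2 ^ (ν / 2) by rw [← Real.rpow_add two_pos, ha_def]; ring_nf]
  field_simp

theorem stmt4_general (N q : ℕ)
    (y : Fin N → ℝ) (H : Matrix (Fin N) (Fin q) ℝ)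
    (S : Matrix (Fin N) (Fin N) ℝ) (hS : S.PosDef)
    (D : Matrix (Fin q) (Fin q) ℝ) (hD : D.PosDef)
    (M : Matrix (Fin q) (Fin q) ℝ) (hM : M = (Hᵀ * S⁻¹ * H + D⁻¹)⁻¹)
    (P : Matrix (Fin N) (Fin N) ℝ) (hP : P = S⁻¹ - S⁻¹ * H * M * Hᵀ * S⁻¹)
    (ν γ : ℝ) (hν : 0 < ν) (hγ : 0 < γ) :
    (∫ s in Set.Ioi (0 : ℝ),
      ((1 / Real.Gamma (ν / 2)) * (γ / 2) ^ (ν / 2) * s ^ (-ν / 2 - 1) *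
          Real.exp (-γ / (2 * s))) *
        ((2 * Real.pi * s) ^ (-(N : ℝ) / 2) * S.det ^ (-(1 : ℝ) / 2) *
          (M.det / D.det) ^ ((1 : ℝ) / 2) * Real.exp (-(y ⬝ᵥ (P *ᵥ y)) / (2 * s))))
      = Real.pi ^ (-(N : ℝ) / 2) * S.det ^ (-(1 : ℝ) / 2) *
          (M.det / D.det) ^ ((1 : ℝ) / 2) *
          (Real.Gamma (((N : ℝ) + ν) / 2) / Real.Gamma (ν / 2)) *
          γ ^ (ν / 2) / (γ + y ⬝ᵥ (P *ᵥ y)) ^ (((N : ℝ) + ν) / 2) := by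
  have hQ : 0 ≤ y ⬝ᵥ (P *ᵥ y) := by
    rw [hP, hM]
    simpa using (hS.inv_sub_mul_mul_inv_mul_posDef hD H).posSemidef.dotProduct_mulVec_nonneg y
  have h := integral_invGamma_mul_gaussian_likelihood
    (c := S.det ^ (-(1 : ℝ) / 2) * (M.det / D.det) ^ ((1 : ℝ) / 2))
    (by positivity : 0 < (N : ℝ) + ν) hγ hQ
  simpa only [mul_assoc] using h

/-- Marginal likelihood under an Inverse-Gamma `(ν/2, γ/2)` prior on the variance. -/
theorem stmt4 (N q : ℕ) (hN : 0 < N) (hq : 0 < q)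
    (y : Fin N → ℝ) (H : Matrix (Fin N) (Fin q) ℝ)
    (S : Matrix (Fin N) (Fin N) ℝ) (hS : S.PosDef)
    (D : Matrix (Fin q) (Fin q) ℝ) (hD : D.PosDef)
    (dvec : Fin q → ℝ) (hDdiag : D = Matrix.diagonal dvec)
    (M : Matrix (Fin q) (Fin q) ℝ) (hM : M = (Hᵀ * S⁻¹ * H + D⁻¹)⁻¹)
    (P : Matrix (Fin N) (Fin N) ℝ) (hP : P = S⁻¹ - S⁻¹ * H * M * Hᵀ * S⁻¹)
    (ν γ : ℝ) (hν : 0 < ν) (hγ : 0 < γ) :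
    (∫ s in Set.Ioi (0 : ℝ),
      ((1 / Real.Gamma (ν / 2)) * (γ / 2) ^ (ν / 2) * s ^ (-ν / 2 - 1) *
          Real.exp (-γ / (2 * s))) *
        ((2 * Real.pi * s) ^ (-(N : ℝ) / 2) * S.det ^ (-(1 : ℝ) / 2) *
          (M.det / D.det) ^ ((1 : ℝ) / 2) * Real.exp (-(y ⬝ᵥ (P *ᵥ y)) / (2 * s))))
      = Real.pi ^ (-(N : ℝ) / 2) * S.det ^ (-(1 : ℝ) / 2) *
          (M.det / D.det) ^ ((1 : ℝ) / 2) *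
          (Real.Gamma (((N : ℝ) + ν) / 2) / Real.Gamma (ν / 2)) *
          γ ^ (ν / 2) / (γ + y ⬝ᵥ (P *ᵥ y)) ^ (((N : ℝ) + ν) / 2) :=
  stmt4_general N q y H S hS D hD M hM P hP ν γ hν hγ
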